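/- For any fixed realized sequence of drawn arms x^1,…,x^T ∈ F and any z ∈ F, the MABSTA total reward satisfies R̂_total ≥ (1−γ)·Σ_{t=1}^T R̂_z(t) − (e−2)·α·(|E|/M^{N−2})·Σ_{t=1}^T Σ_{y∈F} R̂_y(t) − (N·ln M)/α, where R̂_total = Σ_{t=1}^T (Σ_{i=1}^N R_i^{(x^t_i)}(t) + Σ_{(m,n)∈E} R_{mn}^{(x^t_m x^t_n)}(t)). -/

import Mathlib

/-!
MABSTA is Exp3 on the `M ^ N` joint assignments `y`, with the importance-weighted estimator
`R̂_y = ∑ᵢ [yᵢ = xᵢ] aᵢ + ∑ₑ [y agrees with x on e] bₑ`, where `aᵢ = Rᵢ / P(zᵢ = xᵢ)` and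
`bₑ = Rₑ / P(z agrees with x on e)`. The exploration floor `p ≥ γ / M ^ N` makes these marginals at
least `γ / M` and `γ / M ^ 2`, so `α R̂_y ∈ [0, 1]`, and `eˣ ≤ 1 + x + ¾ x²` on `[0, 1]` gives the
potential bound
`α ∑ₜ R̂_z(t) - N log M ≤ log W_T - log W_0 ≤ (1 - γ)⁻¹ ∑ₜ ∑_y (p_y - γ / M ^ N) (α R̂_y + ¾ (α R̂_y)²)`.
The estimator is unbiased, and its second moment `∑_y p_y R̂_y²` is at most
`(N + 2|E|) ∑ᵢ aᵢ + |E| ∑ₑ bₑ`, while the exploration correction is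
`γ / M ^ N · ∑_y R̂_y = (γ / M) ∑ᵢ aᵢ + (γ / M ^ 2) ∑ₑ bₑ`. For `α = γ / (M (N + |E| M))` the latter
dominates `¾ α` times the former, so round `t` contributes at most `α R(xᵗ) / (1 - γ)`. Hence the
total reward is at least `(1 - γ) ∑ₜ R̂_z(t) - (1 - γ) N log M / α`, and the `(e - 2)` term is
nonnegative.
-/

open Finset Real

section IndicatorSums

variable {F κ : Type*}

theorem sum_mul_sum_ite [Fintype F] (p : F → ℝ) (s : Finset κ) (P : κ → F → Prop)
    [∀ k, DecidablePred (P k)] (v : κ → ℝ) :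
    ∑ y, p y * ∑ k ∈ s, (if P k y then v k else 0) =
      ∑ k ∈ s, (∑ y ∈ univ.filter (P k), p y) * v k := by
  simp_rw [mul_sum, mul_ite, mul_zero]
  rw [sum_comm]
  exact sum_congr rfl fun k _ => by rw [← sum_filter, sum_mul]

theorem sum_ite_le_sum {s : Finset κ} {v : κ → ℝ} (hv : ∀ k ∈ s, 0 ≤ v k) (P : κ → F → Prop)
    [∀ k, DecidablePred (P k)] (y : F) :
    ∑ k ∈ s, (if P k y then v k else 0) ≤ ∑ k ∈ s, v k :=
  sum_le_sum fun k hk => by split_ifs <;> simp [hv k hk]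

theorem sum_ite_nonneg {s : Finset κ} {v : κ → ℝ} (hv : ∀ k ∈ s, 0 ≤ v k) (P : κ → F → Prop)
    [∀ k, DecidablePred (P k)] (y : F) :
    0 ≤ ∑ k ∈ s, (if P k y then v k else 0) :=
  sum_nonneg fun k hk => by split_ifs <;> simp [hv k hk]

theorem sum_mul_sum_ite_mul_le [Fintype F] {p : F → ℝ} (hp : ∀ y, 0 ≤ p y) {s : Finset κ}
    {P : κ → F → Prop} [∀ k, DecidablePred (P k)] {v : κ → ℝ} (hv0 : ∀ k ∈ s, 0 ≤ v k)
    (hv : ∀ k ∈ s, v k * ∑ y ∈ univ.filter (P k), p y ≤ 1) {g : F → ℝ} {G : ℝ}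
    (hg : ∀ y, g y ≤ G) (hG : 0 ≤ G) :
    ∑ y, p y * ((∑ k ∈ s, if P k y then v k else 0) * g y) ≤ #s * G := by
  calc ∑ y, p y * ((∑ k ∈ s, if P k y then v k else 0) * g y)
      = ∑ k ∈ s, (∑ y ∈ univ.filter (P k), p y * g y) * v k := by
        rw [← sum_mul_sum_ite]
        exact sum_congr rfl fun y _ => by ring
    _ ≤ ∑ k ∈ s, G := sum_le_sum fun k hk => by
        calc (∑ y ∈ univ.filter (P k), p y * g y) * v k
            ≤ (∑ y ∈ univ.filter (P k), p y * G) * v k := by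
              gcongr with y
              · exact hv0 k hk
              · exact hp y
              · exact hg y
          _ = G * (v k * ∑ y ∈ univ.filter (P k), p y) := by rw [← sum_mul]; ring
          _ ≤ G * 1 := by gcongr; exact hv k hk
          _ = G := mul_one G
    _ = #s * G := by rw [sum_const, nsmul_eq_mul]

end IndicatorSums

section Hedge

variable {F : Type*}

theorem exp_le_one_add_add_sq {x : ℝ} (h0 : 0 ≤ x) (h1 : x ≤ 1) :
    exp x ≤ 1 + x + 3 / 4 * x ^ 2 := by
  have := Real.exp_bound' h0 h1 (n := 2) (by norm_num)
  norm_num [Finset.sum_range_succ] at this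
  linarith

theorem log_sum_mul_exp_sub_log_sum_le [Fintype F] [Nonempty F] {w g : F → ℝ}
    (hw : ∀ y, 0 < w y) (hg0 : ∀ y, 0 ≤ g y) (hg1 : ∀ y, g y ≤ 1) :
    log (∑ y, w y * exp (g y)) - log (∑ y, w y) ≤
      ∑ y, w y / (∑ y', w y') * (g y + 3 / 4 * g y ^ 2) := by
  set W := ∑ y, w y
  set u := ∑ y, w y / W * (g y + 3 / 4 * g y ^ 2)
  have hW : 0 < W := sum_pos (fun y _ => hw y) univ_nonempty
  have hu : 0 ≤ u := sum_nonneg fun y _ =>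
    mul_nonneg (div_nonneg (hw y).le hW.le) (add_nonneg (hg0 y) (by positivity))
  have hle : ∑ y, w y * exp (g y) ≤ W * (1 + u) := by
    calc ∑ y, w y * exp (g y) ≤ ∑ y, (w y + W * (w y / W * (g y + 3 / 4 * g y ^ 2))) :=
          sum_le_sum fun y _ => by
            rw [← mul_assoc, mul_div_cancel₀ _ hW.ne']
            nlinarith [exp_le_one_add_add_sq (hg0 y) (hg1 y), hw y]
      _ = W * (1 + u) := by rw [sum_add_distrib, ← mul_sum]; ring
  have hpos : 0 < ∑ y, w y * exp (g y) :=
    sum_pos (fun y _ => mul_pos (hw y) (exp_pos _)) univ_nonempty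
  calc log (∑ y, w y * exp (g y)) - log W ≤ log (W * (1 + u)) - log W := by
        gcongr
    _ = log (1 + u) := by rw [log_mul hW.ne' (by positivity)]; ring
    _ ≤ u := by linarith [log_le_sub_one_of_pos (by positivity : 0 < 1 + u)]

variable {T : ℕ} {w : ℕ → F → ℝ} {g : Fin T → F → ℝ}

theorem weights_pos (hw0 : ∀ y, w 0 y = 1)
    (hw : ∀ (t : Fin T) y, w (t + 1) y = w t y * exp (g t y)) :
    ∀ s ≤ T, ∀ y, 0 < w s y
  | 0, _, y => by rw [hw0]; exact one_pos
  | s + 1, hs, y => by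
    rw [show w (s + 1) y = _ from hw ⟨s, hs⟩ y]
    exact mul_pos (weights_pos hw0 hw s (by omega) y) (exp_pos _)

theorem Fin.sum_univ_sub_eq_sub (f : ℕ → ℝ) : ∑ t : Fin T, (f (t + 1) - f t) = f T - f 0 := by
  rw [Fin.sum_univ_eq_sum_range (fun n => f (n + 1) - f n), sum_range_sub]

theorem sum_sub_log_card_le [Fintype F] [Nonempty F] (hw0 : ∀ y, w 0 y = 1)
    (hw : ∀ (t : Fin T) y, w (t + 1) y = w t y * exp (g t y))
    (hg0 : ∀ t y, 0 ≤ g t y) (hg1 : ∀ t y, g t y ≤ 1) (z : F) :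
    ∑ t, g t z - log (Fintype.card F) ≤
      ∑ t : Fin T, ∑ y, w t y / (∑ y', w t y') * (g t y + 3 / 4 * g t y ^ 2) := by
  have hpos := weights_pos hw0 hw
  have hz : log (w T z) = ∑ t, g t z := by
    have h0 : log (w 0 z) = 0 := by rw [hw0, log_one]
    rw [← sub_zero (log (w T z)), ← h0, ← Fin.sum_univ_sub_eq_sub fun n => log (w n z)]
    refine sum_congr rfl fun t _ => ?_
    rw [hw, log_mul (hpos t t.2.le z).ne' (exp_pos _).ne', log_exp]
    ring
  have h0 : log (∑ y, w 0 y) = log (Fintype.card F) := by simp [hw0]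
  calc ∑ t, g t z - log (Fintype.card F) = log (w T z) - log (∑ y, w 0 y) := by rw [hz, h0]
    _ ≤ log (∑ y, w T y) - log (∑ y, w 0 y) := by
        gcongr
        · exact hpos T le_rfl z
        · exact single_le_sum (fun y _ => (hpos T le_rfl y).le) (mem_univ z)
    _ = ∑ t : Fin T, (log (∑ y, w (t + 1) y) - log (∑ y, w t y)) :=
        (Fin.sum_univ_sub_eq_sub (fun n => log (∑ y, w n y))).symm
    _ ≤ _ := sum_le_sum fun t _ => by
        simp_rw [hw t]
        exact log_sum_mul_exp_sub_log_sum_le (hpos t t.2.le) (hg0 t) (hg1 t)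

theorem le_of_eq_mixture [Fintype F] {γ c : ℝ} (hγ1 : γ < 1) {p : Fin T → F → ℝ}
    (hw0 : ∀ y, w 0 y = 1) (hw : ∀ (t : Fin T) y, w (t + 1) y = w t y * exp (g t y))
    (hp : ∀ t y, p t y = (1 - γ) * (w t y / ∑ z, w t z) + c) (t : Fin T) (y : F) :
    c ≤ p t y := by
  have hpos := weights_pos hw0 hw t t.2.le
  rw [hp]
  exact le_add_of_nonneg_left (mul_nonneg (by linarith)
    (div_nonneg (hpos y).le (sum_nonneg fun y' _ => (hpos y').le)))

theorem sum_sub_log_card_le_sum_div [Fintype F] [Nonempty F] {γ c : ℝ} (hγ1 : γ < 1)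
    {p : Fin T → F → ℝ} (hw0 : ∀ y, w 0 y = 1)
    (hw : ∀ (t : Fin T) y, w (t + 1) y = w t y * exp (g t y))
    (hp : ∀ t y, p t y = (1 - γ) * (w t y / ∑ z, w t z) + c)
    (hg0 : ∀ t y, 0 ≤ g t y) (hg1 : ∀ t y, g t y ≤ 1) {G : Fin T → ℝ}
    (hG : ∀ t, ∑ y, (p t y - c) * (g t y + 3 / 4 * g t y ^ 2) ≤ G t) (z : F) :
    ∑ t, g t z - log (Fintype.card F) ≤ (∑ t, G t) / (1 - γ) := by
  have h1γ : 0 < 1 - γ := by linarith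
  refine (sum_sub_log_card_le hw0 hw hg0 hg1 z).trans ?_
  rw [sum_div]
  refine sum_le_sum fun t _ => ?_
  have hq : ∀ y, w t y / ∑ z, w t z = (p t y - c) / (1 - γ) := fun y => by
    rw [hp]; field_simp; ring
  calc ∑ y, w t y / (∑ z, w t z) * (g t y + 3 / 4 * g t y ^ 2)
      = (∑ y, (p t y - c) * (g t y + 3 / 4 * g t y ^ 2)) / (1 - γ) := by
        rw [sum_div]
        exact sum_congr rfl fun y _ => by rw [hq, div_mul_eq_mul_div]
    _ ≤ G t / (1 - γ) := by gcongr; exact hG t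

end Hedge

theorem mul_mul_add_mul_eq_of_eq_div {N M K : ℕ} (hN : 0 < N) (hM : 0 < M) {α γ : ℝ}
    (hα : α = γ / (M * (N + K * M))) : α * (M * (N + K * M)) = γ := by
  have hden : (0 : ℝ) < M * (N + K * M) := by positivity
  rw [hα, div_mul_cancel₀ _ hden.ne']

section Round

variable {ι β : Type*} [Fintype ι] [DecidableEq ι] [Fintype β] [DecidableEq β]

theorem card_filter_forall_mem_eq_mul_pow (s : Finset ι) (x : ι → β) :
    #(univ.filter fun z : ι → β => ∀ i ∈ s, z i = x i) * Fintype.card β ^ #s =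
      Fintype.card β ^ Fintype.card ι := by
  have hpi : (univ.filter fun z : ι → β => ∀ i ∈ s, z i = x i) =
      Fintype.piFinset fun i => if i ∈ s then {x i} else univ := by
    ext z
    simp only [mem_filter, mem_univ, true_and, Fintype.mem_piFinset]
    exact forall_congr' fun i => by split_ifs with h <;> simp [h]
  rw [hpi, Fintype.card_piFinset]
  simp only [apply_ite card, card_singleton, card_univ]
  rw [prod_ite, prod_const_one, one_mul, prod_const, ← pow_add, filter_not, filter_mem_eq_inter,
    univ_inter, card_sdiff, card_univ, inter_univ, Nat.sub_add_cancel (card_le_univ s)]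

theorem sum_filter_forall_mem_eq_div_pow [Nonempty β] (s : Finset ι) (x : ι → β) (γ : ℝ) :
    ∑ _z ∈ univ.filter (fun z : ι → β => ∀ i ∈ s, z i = x i),
        γ / (Fintype.card β : ℝ) ^ Fintype.card ι = γ / (Fintype.card β : ℝ) ^ #s := by
  have hM : (0 : ℝ) < Fintype.card β := by exact_mod_cast Fintype.card_pos
  have hcard : (#(univ.filter fun z : ι → β => ∀ i ∈ s, z i = x i) : ℝ) *
      (Fintype.card β : ℝ) ^ #s = (Fintype.card β : ℝ) ^ Fintype.card ι := by
    exact_mod_cast card_filter_forall_mem_eq_mul_pow s x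
  have hne := left_ne_zero_of_mul (hcard ▸ (pow_pos hM _).ne')
  rw [sum_const, nsmul_eq_mul, ← hcard]
  field_simp

def nodeMass (p : (ι → β) → ℝ) (x : ι → β) (i : ι) : ℝ :=
  ∑ z ∈ univ.filter (fun z : ι → β => z i = x i), p z

def edgeMass (p : (ι → β) → ℝ) (x : ι → β) (e : ι × ι) : ℝ :=
  ∑ z ∈ univ.filter (fun z : ι → β => z e.1 = x e.1 ∧ z e.2 = x e.2), p z

theorem nodeMass_const [Nonempty β] (x : ι → β) (i : ι) (γ : ℝ) :
    nodeMass (fun _ => γ / (Fintype.card β : ℝ) ^ Fintype.card ι) x i =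
      γ / Fintype.card β := by
  simpa [nodeMass] using sum_filter_forall_mem_eq_div_pow {i} x γ

theorem edgeMass_const [Nonempty β] (x : ι → β) {e : ι × ι} (he : e.1 ≠ e.2) (γ : ℝ) :
    edgeMass (fun _ => γ / (Fintype.card β : ℝ) ^ Fintype.card ι) x e =
      γ / (Fintype.card β : ℝ) ^ 2 := by
  simpa [edgeMass, card_pair he] using sum_filter_forall_mem_eq_div_pow {e.1, e.2} x γ

variable {p : (ι → β) → ℝ} {γ : ℝ}

theorem div_card_le_nodeMass [Nonempty β]
    (hp : ∀ y, γ / (Fintype.card β : ℝ) ^ Fintype.card ι ≤ p y) (x : ι → β) (i : ι) :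
    γ / Fintype.card β ≤ nodeMass p x i :=
  nodeMass_const x i γ ▸ sum_le_sum fun y _ => hp y

theorem div_card_sq_le_edgeMass [Nonempty β]
    (hp : ∀ y, γ / (Fintype.card β : ℝ) ^ Fintype.card ι ≤ p y) (x : ι → β) {e : ι × ι}
    (he : e.1 ≠ e.2) :
    γ / (Fintype.card β : ℝ) ^ 2 ≤ edgeMass p x e :=
  edgeMass_const x he γ ▸ sum_le_sum fun y _ => hp y

noncomputable def importanceEstimate (p : (ι → β) → ℝ) (x : ι → β) (E : Finset (ι × ι))
    (r : ι → ℝ) (re : ι × ι → ℝ) (y : ι → β) : ℝ :=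
  ∑ i, (if y i = x i then r i / nodeMass p x i else 0) +
    ∑ e ∈ E, (if y e.1 = x e.1 ∧ y e.2 = x e.2 then re e / edgeMass p x e else 0)

variable {x : ι → β} {E : Finset (ι × ι)} {r : ι → ℝ} {re : ι × ι → ℝ}

theorem sum_mul_importanceEstimate (q : (ι → β) → ℝ) :
    ∑ y, q y * importanceEstimate p x E r re y =
      ∑ i, nodeMass q x i * (r i / nodeMass p x i) +
        ∑ e ∈ E, edgeMass q x e * (re e / edgeMass p x e) := by
  simp only [importanceEstimate, mul_add, sum_add_distrib]
  rw [sum_mul_sum_ite q univ (fun i y => y i = x i),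
    sum_mul_sum_ite q E (fun e y => y e.1 = x e.1 ∧ y e.2 = x e.2)]
  rfl

theorem importanceEstimate_nonneg (hp : ∀ y, 0 ≤ p y) (hr : ∀ i, 0 ≤ r i)
    (hre : ∀ e ∈ E, 0 ≤ re e) (y : ι → β) : 0 ≤ importanceEstimate p x E r re y :=
  add_nonneg
    (sum_ite_nonneg (fun i _ => div_nonneg (hr i) (sum_nonneg fun z _ => hp z))
      (fun i y => y i = x i) y)
    (sum_ite_nonneg (fun e he => div_nonneg (hre e he) (sum_nonneg fun z _ => hp z))
      (fun e y => y e.1 = x e.1 ∧ y e.2 = x e.2) y)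

theorem sum_add_sum_eq_importanceEstimate (R : ι → β → ℝ) (Re : ι × ι → β → β → ℝ)
    {Rhat : ι → β → ℝ} {Rhate : ι × ι → β → β → ℝ}
    (hRhat : ∀ i j, Rhat i j =
      if j = x i then R i j / ∑ z ∈ univ.filter (fun z : ι → β => z i = x i), p z else 0)
    (hRhate : ∀ e ∈ E, ∀ j k, Rhate e j k =
      if j = x e.1 ∧ k = x e.2 then
        Re e j k / ∑ z ∈ univ.filter (fun z : ι → β => z e.1 = x e.1 ∧ z e.2 = x e.2), p z
      else 0)
    (y : ι → β) :
    ∑ i, Rhat i (y i) + ∑ e ∈ E, Rhate e (y e.1) (y e.2) =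
      importanceEstimate p x E (fun i => R i (x i)) (fun e => Re e (x e.1) (x e.2)) y := by
  unfold importanceEstimate
  congr 1
  · refine sum_congr rfl fun i _ => ?_
    rw [hRhat]
    split_ifs with h
    · rw [h]; rfl
    · rfl
  · refine sum_congr rfl fun e he => ?_
    rw [hRhate e he]
    split_ifs with h
    · rw [h.1, h.2]; rfl
    · rfl

variable [Nonempty β]

theorem nodeMass_pos (hp : ∀ y, γ / (Fintype.card β : ℝ) ^ Fintype.card ι ≤ p y) (hγ : 0 < γ)
    (x : ι → β) (i : ι) : 0 < nodeMass p x i :=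
  (div_pos hγ (by exact_mod_cast Fintype.card_pos)).trans_le (div_card_le_nodeMass hp x i)

theorem edgeMass_pos (hp : ∀ y, γ / (Fintype.card β : ℝ) ^ Fintype.card ι ≤ p y) (hγ : 0 < γ)
    (x : ι → β) {e : ι × ι} (he : e.1 ≠ e.2) : 0 < edgeMass p x e :=
  (div_pos hγ (by positivity)).trans_le (div_card_sq_le_edgeMass hp x he)

theorem sum_mul_importanceEstimate_self
    (hp : ∀ y, γ / (Fintype.card β : ℝ) ^ Fintype.card ι ≤ p y) (hγ : 0 < γ)
    (hE : ∀ e ∈ E, e.1 ≠ e.2) :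
    ∑ y, p y * importanceEstimate p x E r re y = ∑ i, r i + ∑ e ∈ E, re e := by
  rw [sum_mul_importanceEstimate]
  congr 1
  · exact sum_congr rfl fun i _ => mul_div_cancel₀ _ (nodeMass_pos hp hγ x i).ne'
  · exact sum_congr rfl fun e he => mul_div_cancel₀ _ (edgeMass_pos hp hγ x (hE e he)).ne'

theorem div_pow_mul_sum_importanceEstimate (hE : ∀ e ∈ E, e.1 ≠ e.2) (γ : ℝ) :
    γ / (Fintype.card β : ℝ) ^ Fintype.card ι * ∑ y, importanceEstimate p x E r re y =
      ∑ i, γ / Fintype.card β * (r i / nodeMass p x i) +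
        ∑ e ∈ E, γ / (Fintype.card β : ℝ) ^ 2 * (re e / edgeMass p x e) := by
  rw [mul_sum, sum_mul_importanceEstimate]
  congr 1
  · exact sum_congr rfl fun i _ => by rw [nodeMass_const]
  · exact sum_congr rfl fun e he => by rw [edgeMass_const x (hE e he)]

theorem importanceEstimate_le (hp : ∀ y, γ / (Fintype.card β : ℝ) ^ Fintype.card ι ≤ p y)
    (hγ : 0 < γ) (hr : ∀ i, r i ∈ Set.Icc (0 : ℝ) 1) (hre : ∀ e ∈ E, re e ∈ Set.Icc (0 : ℝ) 1)
    (hE : ∀ e ∈ E, e.1 ≠ e.2) (y : ι → β) :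
    importanceEstimate p x E r re y ≤
      Fintype.card ι * (Fintype.card β / γ) + #E * ((Fintype.card β : ℝ) ^ 2 / γ) := by
  have hM : (0 : ℝ) < Fintype.card β := by exact_mod_cast Fintype.card_pos
  have ha : ∀ i, r i / nodeMass p x i ≤ Fintype.card β / γ := fun i =>
    (div_le_div₀ zero_le_one (hr i).2 (div_pos hγ hM) (div_card_le_nodeMass hp x i)).trans_eq
      (one_div_div _ _)
  have hb : ∀ e ∈ E, re e / edgeMass p x e ≤ (Fintype.card β : ℝ) ^ 2 / γ := fun e he =>
    (div_le_div₀ zero_le_one (hre e he).2 (by positivity)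
      (div_card_sq_le_edgeMass hp x (hE e he))).trans_eq (one_div_div _ _)
  have hMγ : 0 ≤ (Fintype.card β : ℝ) / γ := by positivity
  have hMγ2 : 0 ≤ (Fintype.card β : ℝ) ^ 2 / γ := by positivity
  refine add_le_add ?_ ?_
  · calc ∑ i, (if y i = x i then r i / nodeMass p x i else 0)
        ≤ ∑ _i : ι, (Fintype.card β / γ : ℝ) :=
          sum_le_sum fun i _ => by split_ifs; exacts [ha i, hMγ]
      _ = _ := by rw [sum_const, card_univ, nsmul_eq_mul]
  · calc ∑ e ∈ E, (if y e.1 = x e.1 ∧ y e.2 = x e.2 then re e / edgeMass p x e else 0)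
        ≤ ∑ _e ∈ E, ((Fintype.card β : ℝ) ^ 2 / γ) :=
          sum_le_sum fun e he => by split_ifs; exacts [hb e he, hMγ2]
      _ = _ := by rw [sum_const, nsmul_eq_mul]

theorem sum_mul_importanceEstimate_sq_le
    (hp : ∀ y, γ / (Fintype.card β : ℝ) ^ Fintype.card ι ≤ p y) (hγ : 0 < γ)
    (hr : ∀ i, r i ∈ Set.Icc (0 : ℝ) 1) (hre : ∀ e ∈ E, re e ∈ Set.Icc (0 : ℝ) 1)
    (hE : ∀ e ∈ E, e.1 ≠ e.2) :
    ∑ y, p y * importanceEstimate p x E r re y ^ 2 ≤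
      (Fintype.card ι + 2 * #E) * ∑ i, r i / nodeMass p x i +
        #E * ∑ e ∈ E, re e / edgeMass p x e := by
  set a := fun i => r i / nodeMass p x i
  set b := fun e => re e / edgeMass p x e
  set A := fun y : ι → β => ∑ i, if y i = x i then a i else 0
  set B := fun y : ι → β => ∑ e ∈ E, if y e.1 = x e.1 ∧ y e.2 = x e.2 then b e else 0
  have hp0 : ∀ y, 0 ≤ p y := fun y => (div_pos hγ (by positivity)).le.trans (hp y)
  have ha0 : ∀ i ∈ univ, 0 ≤ a i := fun i _ => div_nonneg (hr i).1 (nodeMass_pos hp hγ x i).le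
  have hb0 : ∀ e ∈ E, 0 ≤ b e := fun e he =>
    div_nonneg (hre e he).1 (edgeMass_pos hp hγ x (hE e he)).le
  have ha1 : ∀ i ∈ univ, a i * nodeMass p x i ≤ 1 := fun i _ =>
    (div_mul_cancel₀ _ (nodeMass_pos hp hγ x i).ne').trans_le (hr i).2
  have hb1 : ∀ e ∈ E, b e * edgeMass p x e ≤ 1 := fun e he =>
    (div_mul_cancel₀ _ (edgeMass_pos hp hγ x (hE e he)).ne').trans_le (hre e he).2
  have hAA := sum_mul_sum_ite_mul_le hp0 ha0 ha1 (sum_ite_le_sum ha0 (fun i y => y i = x i))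
    (sum_nonneg ha0)
  have hBA := sum_mul_sum_ite_mul_le hp0 hb0 hb1 (sum_ite_le_sum ha0 (fun i y => y i = x i))
    (sum_nonneg ha0)
  have hBB := sum_mul_sum_ite_mul_le hp0 hb0 hb1
    (sum_ite_le_sum hb0 (fun e y => y e.1 = x e.1 ∧ y e.2 = x e.2)) (sum_nonneg hb0)
  have hsplit : ∑ y, p y * importanceEstimate p x E r re y ^ 2 =
      ∑ y, p y * (A y * A y) + 2 * ∑ y, p y * (B y * A y) + ∑ y, p y * (B y * B y) := by
    rw [mul_sum, ← sum_add_distrib, ← sum_add_distrib]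
    exact sum_congr rfl fun y _ => by simp only [importanceEstimate]; ring
  rw [card_univ] at hAA
  rw [hsplit]
  linarith

theorem mul_importanceEstimate_le_one [Nonempty ι]
    (hp : ∀ y, γ / (Fintype.card β : ℝ) ^ Fintype.card ι ≤ p y) (hγ : 0 < γ) {α : ℝ}
    (hα : α = γ / (Fintype.card β * (Fintype.card ι + #E * Fintype.card β)))
    (hr : ∀ i, r i ∈ Set.Icc (0 : ℝ) 1) (hre : ∀ e ∈ E, re e ∈ Set.Icc (0 : ℝ) 1)
    (hE : ∀ e ∈ E, e.1 ≠ e.2) (y : ι → β) :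
    α * importanceEstimate p x E r re y ≤ 1 :=
  calc α * importanceEstimate p x E r re y
      ≤ α * (Fintype.card ι * (Fintype.card β / γ) + #E * ((Fintype.card β : ℝ) ^ 2 / γ)) :=
        mul_le_mul_of_nonneg_left (importanceEstimate_le hp hγ hr hre hE y)
          (hα ▸ by positivity)
    _ = α * ((Fintype.card β : ℝ) * (Fintype.card ι + #E * Fintype.card β)) / γ := by ring
    _ = 1 := by
        rw [mul_mul_add_mul_eq_of_eq_div Fintype.card_pos Fintype.card_pos hα, div_self hγ.ne']

theorem mul_sum_mul_importanceEstimate_sq_le [Nonempty ι]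
    (hp : ∀ y, γ / (Fintype.card β : ℝ) ^ Fintype.card ι ≤ p y) (hγ : 0 < γ)
    (hM : 2 ≤ Fintype.card β) {α : ℝ}
    (hα : α = γ / (Fintype.card β * (Fintype.card ι + #E * Fintype.card β)))
    (hr : ∀ i, r i ∈ Set.Icc (0 : ℝ) 1) (hre : ∀ e ∈ E, re e ∈ Set.Icc (0 : ℝ) 1)
    (hE : ∀ e ∈ E, e.1 ≠ e.2) :
    3 / 4 * α * ∑ y, p y * importanceEstimate p x E r re y ^ 2 ≤
      γ / (Fintype.card β : ℝ) ^ Fintype.card ι * ∑ y, importanceEstimate p x E r re y := by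
  have hM' : (2 : ℝ) ≤ Fintype.card β := by exact_mod_cast hM
  have hα0 : 0 ≤ α := hα ▸ by positivity
  have hαγ := mul_mul_add_mul_eq_of_eq_div Fintype.card_pos Fintype.card_pos hα
  have ha0 : 0 ≤ ∑ i, r i / nodeMass p x i :=
    sum_nonneg fun i _ => div_nonneg (hr i).1 (nodeMass_pos hp hγ x i).le
  have hb0 : 0 ≤ ∑ e ∈ E, re e / edgeMass p x e :=
    sum_nonneg fun e he => div_nonneg (hre e he).1 (edgeMass_pos hp hγ x (hE e he)).le
  have hnode : 3 / 4 * α * (Fintype.card ι + 2 * #E) ≤ γ / Fintype.card β := by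
    rw [le_div_iff₀ (by positivity), ← hαγ]
    nlinarith [mul_nonneg hα0 (mul_nonneg (Nat.cast_nonneg #E) (sub_nonneg.2 hM'))]
  have hedge : 3 / 4 * α * #E ≤ γ / (Fintype.card β : ℝ) ^ 2 := by
    rw [le_div_iff₀ (by positivity), ← hαγ]
    nlinarith [mul_nonneg hα0 (Nat.cast_nonneg (Fintype.card ι) : (0 : ℝ) ≤ _),
      mul_nonneg (mul_nonneg hα0 (Nat.cast_nonneg #E)) (sq_nonneg (Fintype.card β : ℝ))]
  rw [div_pow_mul_sum_importanceEstimate hE, ← mul_sum, ← mul_sum]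
  calc 3 / 4 * α * ∑ y, p y * importanceEstimate p x E r re y ^ 2
      ≤ 3 / 4 * α * ((Fintype.card ι + 2 * #E) * ∑ i, r i / nodeMass p x i +
          #E * ∑ e ∈ E, re e / edgeMass p x e) := by
        gcongr
        exact sum_mul_importanceEstimate_sq_le hp hγ hr hre hE
    _ = 3 / 4 * α * (Fintype.card ι + 2 * #E) * ∑ i, r i / nodeMass p x i +
          3 / 4 * α * #E * ∑ e ∈ E, re e / edgeMass p x e := by ring
    _ ≤ _ := by gcongr

theorem sum_sub_mul_importanceEstimate_add_sq_le [Nonempty ι]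
    (hp : ∀ y, γ / (Fintype.card β : ℝ) ^ Fintype.card ι ≤ p y) (hγ : 0 < γ)
    (hM : 2 ≤ Fintype.card β) {α : ℝ}
    (hα : α = γ / (Fintype.card β * (Fintype.card ι + #E * Fintype.card β)))
    (hr : ∀ i, r i ∈ Set.Icc (0 : ℝ) 1) (hre : ∀ e ∈ E, re e ∈ Set.Icc (0 : ℝ) 1)
    (hE : ∀ e ∈ E, e.1 ≠ e.2) :
    ∑ y, (p y - γ / (Fintype.card β : ℝ) ^ Fintype.card ι) *
        (α * importanceEstimate p x E r re y + 3 / 4 * (α * importanceEstimate p x E r re y) ^ 2)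
      ≤ α * (∑ i, r i + ∑ e ∈ E, re e) := by
  have hvar := mul_sum_mul_importanceEstimate_sq_le (x := x) hp hγ hM hα hr hre hE
  set c := γ / (Fintype.card β : ℝ) ^ Fintype.card ι
  set est := importanceEstimate p x E r re
  have hc : 0 ≤ c := by positivity
  have hα0 : 0 ≤ α := hα ▸ by positivity
  calc ∑ y, (p y - c) * (α * est y + 3 / 4 * (α * est y) ^ 2)
      ≤ ∑ y, (α * (p y * est y) - α * (c * est y) + α * (3 / 4 * α * (p y * est y ^ 2))) :=
        sum_le_sum fun y _ => by nlinarith [mul_nonneg hc (sq_nonneg (α * est y))]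
    _ = α * ∑ y, p y * est y - α * (c * ∑ y, est y - 3 / 4 * α * ∑ y, p y * est y ^ 2) := by
        simp only [sum_add_distrib, sum_sub_distrib, ← mul_sum]; ring
    _ ≤ α * ∑ y, p y * est y := by nlinarith
    _ = α * (∑ i, r i + ∑ e ∈ E, re e) := by rw [sum_mul_importanceEstimate_self hp hγ hE]

end Round

theorem sub_sub_div_le_of_mul_sub_le_div {α γ S A K D : ℝ} (hα : 0 < α) (hγ0 : 0 ≤ γ)
    (hγ1 : γ < 1) (hK : 0 ≤ K) (hD : 0 ≤ D) (h : α * S - K ≤ α * A / (1 - γ)) :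
    (1 - γ) * S - D - K / α ≤ A := by
  rw [le_div_iff₀ (by linarith), ← mul_div_cancel₀ K hα.ne'] at h
  have h' : (1 - γ) * (S - K / α) ≤ A := le_of_mul_le_mul_left (by linarith) hα
  nlinarith [mul_nonneg hγ0 (div_nonneg hK hα.le)]

theorem mabsta_total_reward_lower_bound_general
    (N M T : ℕ) (hN : 2 ≤ N) (hM : 3 ≤ M)
    (E : Finset (Fin N × Fin N)) (hE : ∀ e ∈ E, e.1 ≠ e.2)
    (γ : ℝ) (hγ0 : 0 < γ) (hγ1 : γ < 1)
    (α : ℝ) (hα : α = γ / ((M : ℝ) * ((N : ℝ) + (E.card : ℝ) * (M : ℝ))))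
    (R : Fin T → Fin N → Fin M → ℝ)
    (hR : ∀ t i j, R t i j ∈ Set.Icc (0 : ℝ) 1)
    (Re : Fin T → Fin N × Fin N → Fin M → Fin M → ℝ)
    (hRe : ∀ t, ∀ e ∈ E, ∀ j k, Re t e j k ∈ Set.Icc (0 : ℝ) 1)
    (xs : Fin T → Fin N → Fin M)
    (w : ℕ → (Fin N → Fin M) → ℝ)
    (hw0 : ∀ y, w 0 y = 1)
    (p : Fin T → (Fin N → Fin M) → ℝ)
    (hp : ∀ (t : Fin T) (y : Fin N → Fin M), p t y =
      (1 - γ) * (w t y / ∑ z : Fin N → Fin M, w t z) + γ / (M : ℝ) ^ N)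
    (Rhat : Fin T → Fin N → Fin M → ℝ)
    (hRhat : ∀ (t : Fin T) (i : Fin N) (j : Fin M), Rhat t i j =
      if j = xs t i then
        R t i j /
          (∑ z ∈ Finset.univ.filter (fun z : Fin N → Fin M => z i = xs t i), p t z)
      else 0)
    (Rhate : Fin T → Fin N × Fin N → Fin M → Fin M → ℝ)
    (hRhate : ∀ (t : Fin T), ∀ e ∈ E, ∀ j k : Fin M, Rhate t e j k =
      if j = xs t e.1 ∧ k = xs t e.2 then
        Re t e j k /
          (∑ z ∈ Finset.univ.filter
            (fun z : Fin N → Fin M => z e.1 = xs t e.1 ∧ z e.2 = xs t e.2), p t z)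
      else 0)
    (RhatArm : Fin T → (Fin N → Fin M) → ℝ)
    (hRhatArm : ∀ (t : Fin T) (y : Fin N → Fin M), RhatArm t y =
      ∑ i, Rhat t i (y i) + ∑ e ∈ E, Rhate t e (y e.1) (y e.2))
    (hwrec : ∀ (t : Fin T) (y : Fin N → Fin M),
      w (t + 1) y = w t y * Real.exp (α * RhatArm t y)) :
    ∀ z : Fin N → Fin M,
      ∑ t, (∑ i, R t i (xs t i) + ∑ e ∈ E, Re t e (xs t e.1) (xs t e.2))
        ≥ (1 - γ) * (∑ t, RhatArm t z)
          - (Real.exp 1 - 2) * α * ((E.card : ℝ) / (M : ℝ) ^ (N - 2))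
              * (∑ t, ∑ y : Fin N → Fin M, RhatArm t y)
          - (N : ℝ) * Real.log M / α := by
  intro z
  have : Nonempty (Fin N) := ⟨⟨0, by omega⟩⟩
  have : Nonempty (Fin M) := ⟨⟨0, by omega⟩⟩
  have hα0 : 0 < α := by
    have : (0 : ℝ) < N := by exact_mod_cast (by omega : 0 < N)
    have : (0 : ℝ) < M := by exact_mod_cast (by omega : 0 < M)
    rw [hα]; positivity
  have hpc : ∀ t y, γ / (Fintype.card (Fin M) : ℝ) ^ Fintype.card (Fin N) ≤ p t y := by
    simpa using le_of_eq_mixture hγ1 hw0 hwrec hp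
  have hα' : α = γ / (Fintype.card (Fin M) *
      (Fintype.card (Fin N) + #E * Fintype.card (Fin M))) := by
    simpa using hα
  have hr := fun t i => hR t i (xs t i)
  have hre := fun t e he => hRe t e he (xs t e.1) (xs t e.2)
  have hest : ∀ t y, RhatArm t y = importanceEstimate (p t) (xs t) E (fun i => R t i (xs t i))
      (fun e => Re t e (xs t e.1) (xs t e.2)) y := fun t y =>
    (hRhatArm t y).trans (sum_add_sum_eq_importanceEstimate (R t) (Re t) (hRhat t) (hRhate t) y)
  have hest0 : ∀ t y, 0 ≤ RhatArm t y := fun t y => hest t y ▸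
    importanceEstimate_nonneg (fun y => (div_nonneg hγ0.le (by positivity)).trans (hpc t y))
      (fun i => (hr t i).1) (fun e he => (hre t e he).1) y
  have hround := fun t => sum_sub_mul_importanceEstimate_add_sq_le (x := xs t) (hpc t) hγ0
    (by simp only [Fintype.card_fin]; omega) hα' (hr t) (hre t) hE
  have hpot := sum_sub_log_card_le_sum_div hγ1 hw0 hwrec hp (g := fun t y => α * RhatArm t y)
    (fun t y => mul_nonneg hα0.le (hest0 t y))
    (fun t y => hest t y ▸ mul_importanceEstimate_le_one (hpc t) hγ0 hα' (hr t) (hre t) hE y)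
    (fun t => by simpa [hest] using hround t) z
  rw [← mul_sum, ← mul_sum, Fintype.card_fun, Fintype.card_fin, Fintype.card_fin, Nat.cast_pow,
    log_pow] at hpot
  refine sub_sub_div_le_of_mul_sub_le_div hα0 hγ0.le hγ1 ?_ ?_ hpot
  · exact mul_nonneg (Nat.cast_nonneg N) (log_nonneg (by exact_mod_cast (by omega : 1 ≤ M)))
  · exact mul_nonneg (mul_nonneg (mul_nonneg (by linarith [add_one_le_exp 1]) hα0.le)
      (by positivity)) (sum_nonneg fun t _ => sum_nonneg fun y _ => hest0 t y)

/-- **eq. (21) of the paper.**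
For any fixed realized sequence of drawn arms `x^1,…,x^T ∈ F` and any `z ∈ F`,
the MABSTA total reward satisfies
`R̂_total ≥ (1−γ)·Σ_t R̂_z(t) − (e−2)·α·(|E|/M^{N−2})·Σ_t Σ_{y∈F} R̂_y(t) − (N·ln M)/α`. -/
theorem mabsta_total_reward_lower_bound
    (N M T : ℕ) (hN : 2 ≤ N) (hM : 3 ≤ M) (hT : 1 ≤ T)
    (E : Finset (Fin N × Fin N)) (hE : ∀ e ∈ E, e.1 ≠ e.2) (hEcard : 3 ≤ E.card)
    (γ : ℝ) (hγ0 : 0 < γ) (hγ1 : γ < 1)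
    (α : ℝ) (hα : α = γ / ((M : ℝ) * ((N : ℝ) + (E.card : ℝ) * (M : ℝ))))
    (R : Fin T → Fin N → Fin M → ℝ)
    (hR : ∀ t i j, R t i j ∈ Set.Icc (0 : ℝ) 1)
    (Re : Fin T → Fin N × Fin N → Fin M → Fin M → ℝ)
    (hRe : ∀ t, ∀ e ∈ E, ∀ j k, Re t e j k ∈ Set.Icc (0 : ℝ) 1)
    (xs : Fin T → Fin N → Fin M)
    (w : ℕ → (Fin N → Fin M) → ℝ)
    (hw0 : ∀ y, w 0 y = 1)
    (p : Fin T → (Fin N → Fin M) → ℝ)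
    (hp : ∀ (t : Fin T) (y : Fin N → Fin M), p t y =
      (1 - γ) * (w t y / ∑ z : Fin N → Fin M, w t z) + γ / (M : ℝ) ^ N)
    (Rhat : Fin T → Fin N → Fin M → ℝ)
    (hRhat : ∀ (t : Fin T) (i : Fin N) (j : Fin M), Rhat t i j =
      if j = xs t i then
        R t i j /
          (∑ z ∈ Finset.univ.filter (fun z : Fin N → Fin M => z i = xs t i), p t z)
      else 0)
    (Rhate : Fin T → Fin N × Fin N → Fin M → Fin M → ℝ)
    (hRhate : ∀ (t : Fin T), ∀ e ∈ E, ∀ j k : Fin M, Rhate t e j k =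
      if j = xs t e.1 ∧ k = xs t e.2 then
        Re t e j k /
          (∑ z ∈ Finset.univ.filter
            (fun z : Fin N → Fin M => z e.1 = xs t e.1 ∧ z e.2 = xs t e.2), p t z)
      else 0)
    (RhatArm : Fin T → (Fin N → Fin M) → ℝ)
    (hRhatArm : ∀ (t : Fin T) (y : Fin N → Fin M), RhatArm t y =
      ∑ i, Rhat t i (y i) + ∑ e ∈ E, Rhate t e (y e.1) (y e.2))
    (hwrec : ∀ (t : Fin T) (y : Fin N → Fin M),
      w (t + 1) y = w t y * Real.exp (α * RhatArm t y)) :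
    ∀ z : Fin N → Fin M,
      ∑ t, (∑ i, R t i (xs t i) + ∑ e ∈ E, Re t e (xs t e.1) (xs t e.2))
        ≥ (1 - γ) * (∑ t, RhatArm t z)
          - (Real.exp 1 - 2) * α * ((E.card : ℝ) / (M : ℝ) ^ (N - 2))
              * (∑ t, ∑ y : Fin N → Fin M, RhatArm t y)
          - (N : ℝ) * Real.log M / α :=
  mabsta_total_reward_lower_bound_general N M T hN hM E hE γ hγ0 hγ1 α hα R hR Re hRe xs w hw0 p hp
    Rhat hRhat Rhate hRhate RhatArm hRhatArm hwrec
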